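/- For two univariate skew-normal random variables X₁ ~ SN(μ₁, σ², δ₁) and X₂ ~ SN(μ₂, σ², δ₂) with the same scale σ, if μ₁ ≤ μ₂ and δ₁ ≤ δ₂ then X₁ is less than X₂ in the usual stochastic order, i.e., P(X₁ > t) ≤ P(X₂ > t) for all t ∈ ℝ. -/

import Mathlib

/-! Writing `y = (x - μ) / σ` and `α = δ / √(σ² - δ²)`, the density is `(2/σ) φ(y) Φ(α y)`, and `α`
is increasing in `δ`. Raising `μ` translates the density to the right, which can only increase
the mass of `(t, ∞)`. For `α₁ ≤ α₂` the difference of the two densities is nonnegative right of `μ`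
and, because `Φ(-z) = 1 - Φ(z)`, antisymmetric about `μ`; so over `(t, ∞)` its integral is the
integral over the part right of `2μ - t`, the contribution of `(t, 2μ - t)` cancelling. -/

open MeasureTheory Real

/-- The standard normal density. -/
noncomputable def stdNormalPDF (z : ℝ) : ℝ := (Real.sqrt (2 * π))⁻¹ * Real.exp (-z ^ 2 / 2)

/-- The standard normal cumulative distribution function. -/
noncomputable def stdNormalCDF (z : ℝ) : ℝ := ∫ t in Set.Iic z, stdNormalPDF t

/-- The density of the univariate skew-normal distribution `SN(μ, σ², δ)` with
location `μ`, scale `σ > 0` and parameter `δ ∈ (−σ, σ)`, expressed via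
`α = δ / √(σ² − δ²)`. -/
noncomputable def snPDF (μ σ δ : ℝ) (x : ℝ) : ℝ :=
  (2 / σ) * stdNormalPDF ((x - μ) / σ) *
    stdNormalCDF ((δ / Real.sqrt (σ ^ 2 - δ ^ 2)) * ((x - μ) / σ))

open Set

section StdNormal

lemma stdNormalPDF_eq_gaussianPDFReal : stdNormalPDF = ProbabilityTheory.gaussianPDFReal 0 1 := by
  ext z
  simp [stdNormalPDF, ProbabilityTheory.gaussianPDFReal]

lemma stdNormalPDF_nonneg (z : ℝ) : 0 ≤ stdNormalPDF z := by
  unfold stdNormalPDF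
  positivity

lemma stdNormalPDF_neg (z : ℝ) : stdNormalPDF (-z) = stdNormalPDF z := by
  simp [stdNormalPDF]

lemma integrable_stdNormalPDF : Integrable stdNormalPDF := by
  rw [stdNormalPDF_eq_gaussianPDFReal]
  exact ProbabilityTheory.integrable_gaussianPDFReal 0 1

lemma integral_stdNormalPDF : ∫ z, stdNormalPDF z = 1 := by
  rw [stdNormalPDF_eq_gaussianPDFReal]
  exact ProbabilityTheory.integral_gaussianPDFReal_eq_one 0 one_ne_zero

lemma stdNormalCDF_nonneg (z : ℝ) : 0 ≤ stdNormalCDF z :=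
  setIntegral_nonneg measurableSet_Iic fun x _ => stdNormalPDF_nonneg x

lemma monotone_stdNormalCDF : Monotone stdNormalCDF := fun _ _ hab =>
  setIntegral_mono_set integrable_stdNormalPDF.integrableOn
    (.of_forall stdNormalPDF_nonneg) (Iic_subset_Iic.mpr hab).eventuallyLE

lemma stdNormalCDF_add_integral_Ioi (z : ℝ) :
    stdNormalCDF z + ∫ x in Ioi z, stdNormalPDF x = 1 := by
  rw [← integral_stdNormalPDF, stdNormalCDF,
    ← integral_add_compl measurableSet_Iic integrable_stdNormalPDF, compl_Iic]

lemma stdNormalCDF_le_one (z : ℝ) : stdNormalCDF z ≤ 1 := by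
  have := setIntegral_nonneg (μ := volume) measurableSet_Ioi fun x (_ : x ∈ Ioi z) =>
    stdNormalPDF_nonneg x
  linarith [stdNormalCDF_add_integral_Ioi z]

lemma stdNormalCDF_neg (z : ℝ) : stdNormalCDF (-z) = 1 - stdNormalCDF z := by
  have : stdNormalCDF (-z) = ∫ x in Ioi z, stdNormalPDF x := by
    rw [stdNormalCDF, ← neg_neg z, ← integral_comp_neg_Iic, neg_neg]
    simp only [stdNormalPDF_neg]
  linarith [stdNormalCDF_add_integral_Ioi z]

end StdNormal

lemma setIntegral_Ioi_comp_sub_right {E : Type*} [NormedAddCommGroup E] [NormedSpace ℝ E]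
    (f : ℝ → E) (t c : ℝ) : ∫ x in Ioi t, f (x - c) = ∫ x in Ioi (t - c), f x := by
  rw [← integral_indicator measurableSet_Ioi, ← integral_indicator measurableSet_Ioi,
    ← integral_sub_right_eq_self ((Ioi (t - c)).indicator f) c]
  congr 1 with x
  simp [indicator]

lemma setIntegral_Ioi_nonneg_of_antisymm {g : ℝ → ℝ} {μ t : ℝ} (hg : IntegrableOn g (Ioi t))
    (hodd : ∀ x, g (2 * μ - x) = -g x) (hpos : ∀ x, μ ≤ x → 0 ≤ g x) :
    0 ≤ ∫ x in Ioi t, g x := by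
  rcases le_or_gt μ t with hμt | htμ
  · exact setIntegral_nonneg measurableSet_Ioi fun x hx => hpos x (hμt.trans (le_of_lt hx))
  have htt' : t ≤ 2 * μ - t := by linarith
  have hcancel : ∫ x in t..2 * μ - t, g x = 0 := by
    have := intervalIntegral.integral_comp_sub_left g (a := t) (b := 2 * μ - t) (2 * μ)
    simp only [hodd, intervalIntegral.integral_neg, sub_sub_cancel] at this
    linarith
  rw [← Ioc_union_Ioi_eq_Ioi htt', setIntegral_union (Ioc_disjoint_Ioi le_rfl) measurableSet_Ioi
    (hg.mono_set Ioc_subset_Ioi_self) (hg.mono_set (Ioi_subset_Ioi htt')),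
    ← intervalIntegral.integral_of_le htt', hcancel, zero_add]
  exact setIntegral_nonneg measurableSet_Ioi fun x hx => hpos x (by linarith [mem_Ioi.mp hx])

noncomputable def skewNormalPDF (μ σ α x : ℝ) : ℝ :=
  (2 / σ) * stdNormalPDF ((x - μ) / σ) * stdNormalCDF (α * ((x - μ) / σ))

section SkewNormal

variable {μ σ α : ℝ}

lemma skewNormalPDF_nonneg (hσ : 0 ≤ σ) (x : ℝ) : 0 ≤ skewNormalPDF μ σ α x := by
  unfold skewNormalPDF
  have := stdNormalPDF_nonneg ((x - μ) / σ)
  have := stdNormalCDF_nonneg (α * ((x - μ) / σ))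
  positivity

lemma integrable_skewNormalPDF (hσ : σ ≠ 0) : Integrable (skewNormalPDF μ σ α) := by
  have hφ : Integrable fun x => 2 / σ * stdNormalPDF ((x - μ) / σ) :=
    ((integrable_stdNormalPDF.comp_div hσ).comp_sub_right μ).const_mul _
  refine hφ.mul_bdd (c := 1) ?_ (.of_forall fun x => ?_)
  · exact (monotone_stdNormalCDF.measurable.comp (by fun_prop)).aestronglyMeasurable
  · rw [norm_of_nonneg (stdNormalCDF_nonneg _)]
    exact stdNormalCDF_le_one _

lemma skewNormalPDF_add_location (c x : ℝ) :
    skewNormalPDF (μ + c) σ α x = skewNormalPDF μ σ α (x - c) := by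
  simp only [skewNormalPDF, sub_add_eq_sub_sub_swap, sub_right_comm x c μ]

lemma setIntegral_Ioi_skewNormalPDF_mono_location {μ₁ μ₂ : ℝ} (hσ : 0 < σ) (hμ : μ₁ ≤ μ₂)
    (t : ℝ) :
    ∫ x in Ioi t, skewNormalPDF μ₁ σ α x ≤ ∫ x in Ioi t, skewNormalPDF μ₂ σ α x := by
  rw [← add_sub_cancel μ₁ μ₂]
  simp only [skewNormalPDF_add_location, setIntegral_Ioi_comp_sub_right]
  exact setIntegral_mono_set (integrable_skewNormalPDF hσ.ne').integrableOn
    (.of_forall (skewNormalPDF_nonneg hσ.le)) (Ioi_subset_Ioi (by linarith)).eventuallyLE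

lemma setIntegral_Ioi_skewNormalPDF_mono_shape {α₁ α₂ : ℝ} (hσ : 0 < σ) (hα : α₁ ≤ α₂)
    (t : ℝ) :
    ∫ x in Ioi t, skewNormalPDF μ σ α₁ x ≤ ∫ x in Ioi t, skewNormalPDF μ σ α₂ x := by
  have hint := fun α =>
    (integrable_skewNormalPDF (μ := μ) (α := α) hσ.ne').integrableOn (s := Ioi t)
  rw [← sub_nonneg, ← integral_sub (hint α₂) (hint α₁)]
  refine setIntegral_Ioi_nonneg_of_antisymm (μ := μ) ((hint α₂).sub (hint α₁)) (fun x => ?_)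
    fun x hx => ?_
  · have : (2 * μ - x - μ) / σ = -((x - μ) / σ) := by ring
    simp only [skewNormalPDF, this, stdNormalPDF_neg, mul_neg, stdNormalCDF_neg]
    ring
  · have hy : 0 ≤ (x - μ) / σ := div_nonneg (sub_nonneg.mpr hx) hσ.le
    have := monotone_stdNormalCDF (mul_le_mul_of_nonneg_right hα hy)
    have := stdNormalPDF_nonneg ((x - μ) / σ)
    simp only [skewNormalPDF, sub_nonneg]
    gcongr

end SkewNormal

lemma monotoneOn_div_sqrt_sq_sub_sq (σ : ℝ) :
    MonotoneOn (fun δ => δ / √(σ ^ 2 - δ ^ 2)) (Ioo (-σ) σ) := by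
  have mono_nonneg : ∀ a b, 0 ≤ a → a ≤ b → b < σ → a / √(σ ^ 2 - a ^ 2) ≤ b / √(σ ^ 2 - b ^ 2) :=
    fun a b ha hab hb => div_le_div₀ (ha.trans hab) hab (sqrt_pos.mpr (by nlinarith))
      (sqrt_le_sqrt (by nlinarith))
  intro a ⟨ha, _⟩ b ⟨_, hb⟩ hab
  rcases le_total 0 a with ha0 | ha0
  · exact mono_nonneg a b ha0 hab hb
  rcases le_total b 0 with hb0 | hb0
  · simpa [neg_div] using mono_nonneg (-b) (-a) (neg_nonneg.mpr hb0) (neg_le_neg hab) (by linarith)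
  · exact (div_nonpos_of_nonpos_of_nonneg ha0 (sqrt_nonneg _)).trans
      (div_nonneg hb0 (sqrt_nonneg _))

/-- If `X₁ ~ SN(μ₁, σ², δ₁)` and `X₂ ~ SN(μ₂, σ², δ₂)` with the same scale `σ`,
`μ₁ ≤ μ₂` and `δ₁ ≤ δ₂`, then `X₁ ≤_st X₂`: the survival function of `X₁` is
pointwise below that of `X₂`. -/
theorem stmt14 (μ₁ μ₂ σ δ₁ δ₂ : ℝ) (hσ : 0 < σ)
    (hδ₁ : -σ < δ₁ ∧ δ₁ < σ) (hδ₂ : -σ < δ₂ ∧ δ₂ < σ)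
    (hμ : μ₁ ≤ μ₂) (hδ : δ₁ ≤ δ₂) :
    ∀ t : ℝ, ∫ x in Set.Ioi t, snPDF μ₁ σ δ₁ x ≤ ∫ x in Set.Ioi t, snPDF μ₂ σ δ₂ x := by
  intro t
  calc ∫ x in Ioi t, skewNormalPDF μ₁ σ (δ₁ / √(σ ^ 2 - δ₁ ^ 2)) x
      ≤ ∫ x in Ioi t, skewNormalPDF μ₁ σ (δ₂ / √(σ ^ 2 - δ₂ ^ 2)) x :=
        setIntegral_Ioi_skewNormalPDF_mono_shape hσ
          (monotoneOn_div_sqrt_sq_sub_sq σ hδ₁ hδ₂ hδ) t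
    _ ≤ ∫ x in Ioi t, skewNormalPDF μ₂ σ (δ₂ / √(σ ^ 2 - δ₂ ^ 2)) x :=
        setIntegral_Ioi_skewNormalPDF_mono_location hσ hμ t
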